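/- Let 1 ≤ α < 2, ℓ > 0, and H(A) = ℓ |A|^α. Then for every λ ∈ ℝ^{3×3} with λ ≠ 0 and every μ ∈ ℝ^{3×3}, g_H(λ, μ) = +∞. -/

import Mathlib

open scoped BigOperators

noncomputable section

/-- `3 × 3` real matrices, as functions of (row, column). -/
abbrev M33 := Fin 3 → Fin 3 → ℝ

/-- The Levi-Civita symbol on indices in `Fin 3`. -/
def eps (i j k : Fin 3) : ℝ :=
  ((i.val : ℝ) - j.val) * ((j.val : ℝ) - k.val) * ((k.val : ℝ) - i.val) / 2

/-- The contraction `X : Y = Σ_{i,j} X_{ij} Y_{ij}`. -/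
def dotM (X Y : M33) : ℝ := ∑ i, ∑ j, X i j * Y i j

/-- `T(A)_{Zp} = ε_{pqr} ε_{ZBC} A_{Bq} A_{Cr}`. -/
def Tmap (A : M33) : M33 :=
  fun Z p => ∑ q, ∑ r, ∑ B, ∑ C, eps p q r * eps Z B C * A B q * A C r

/-- The Frobenius norm on `M33`. -/
def fnorm (A : M33) : ℝ := Real.sqrt (∑ i, ∑ j, (A i j) ^ 2)

/-- `g_H(λ, μ) = sup_{A} ( A:μ + λ:T(A) − H(A) )`, valued in `ℝ ∪ {±∞}` (the
supremum is never `-∞` since `H` is real-valued). -/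
def gH (H : M33 → ℝ) (lam mu : M33) : EReal :=
  ⨆ A : M33, ((dotM A mu + dotM lam (Tmap A) - H A : ℝ) : EReal)
/-! `T(A)` is twice the cofactor matrix of `A`, so it is homogeneous of degree 2 while `H` has
degree `α < 2`. Along a ray `t • A` with `λ : T(A) > 0` the objective is therefore
`c t² + O(t) - O(t^α) → +∞`. Such an `A` exists as soon as `λ_{Zp} ≠ 0`: take a matrix whose
only nonzero `2 × 2` minor is the one complementary to the entry `(Z, p)`. -/

open Filter Topology Set

theorem EReal.iSup_coe_eq_top_of_not_bddAbove {ι : Type*} {f : ι → ℝ}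
    (hf : ¬BddAbove (range f)) : ⨆ i, (f i : EReal) = ⊤ := by
  refine iSup_eq_top.2 fun b hb => ?_
  obtain ⟨x, hbx, -⟩ := EReal.lt_iff_exists_real_btwn.1 hb
  obtain ⟨_, ⟨i, rfl⟩, hxi⟩ := not_bddAbove_iff.1 hf x
  exact ⟨i, hbx.trans (EReal.coe_lt_coe_iff.2 hxi)⟩

theorem tendsto_quadratic_sub_rpow_atTop {c α : ℝ} (hc : 0 < c) (hα : α < 2) (b K : ℝ) :
    Tendsto (fun t : ℝ => c * t ^ 2 + b * t - K * t ^ α) atTop atTop := by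
  have hfactor : Tendsto (fun t : ℝ => c + b * t⁻¹ - K * t ^ (α - 2)) atTop (𝓝 c) := by
    have hinv : Tendsto (fun t : ℝ => t⁻¹) atTop (𝓝 0) := tendsto_inv_atTop_zero
    have hrpow : Tendsto (fun t : ℝ => t ^ (α - 2)) atTop (𝓝 0) := by
      simpa using tendsto_rpow_neg_atTop (y := 2 - α) (by linarith)
    simpa using ((hinv.const_mul b).const_add c).sub (hrpow.const_mul K)
  refine ((tendsto_pow_atTop two_ne_zero).atTop_mul_pos hc hfactor).congr' ?_
  filter_upwards [eventually_gt_atTop 0] with t ht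
  rw [Real.rpow_sub ht, Real.rpow_two]
  field_simp

theorem dotM_smul_left (t : ℝ) (A B : M33) : dotM (t • A) B = t * dotM A B := by
  simp only [dotM, Pi.smul_apply, smul_eq_mul, Finset.mul_sum, mul_assoc]

theorem dotM_smul_right (t : ℝ) (A B : M33) : dotM A (t • B) = t * dotM A B := by
  simp only [dotM, Pi.smul_apply, smul_eq_mul, Finset.mul_sum, mul_left_comm]

theorem Tmap_smul (t : ℝ) (A : M33) : Tmap (t • A) = t ^ 2 • Tmap A := by
  ext Z p
  simp only [Tmap, Pi.smul_apply, smul_eq_mul, Finset.mul_sum]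
  refine Finset.sum_congr rfl fun q _ => Finset.sum_congr rfl fun r _ =>
    Finset.sum_congr rfl fun B _ => Finset.sum_congr rfl fun C _ => by ring

theorem fnorm_nonneg (A : M33) : 0 ≤ fnorm A := Real.sqrt_nonneg _

theorem fnorm_smul (t : ℝ) (A : M33) : fnorm (t • A) = |t| * fnorm A := by
  simp only [fnorm, Pi.smul_apply, smul_eq_mul, mul_pow, ← Finset.mul_sum]
  rw [Real.sqrt_mul (sq_nonneg t), Real.sqrt_sq_eq_abs]

def pairMatrix (Z p : Fin 3) (s : ℝ) : M33 :=
  fun i j => (if i = Z + 1 ∧ j = p + 1 then s else 0) + (if i = Z + 2 ∧ j = p + 2 then 1 else 0)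

theorem dotM_Tmap_pairMatrix (lam : M33) (Z p : Fin 3) (s : ℝ) :
    dotM lam (Tmap (pairMatrix Z p s)) = 2 * s * lam Z p := by
  fin_cases Z <;> fin_cases p <;>
    simp [dotM, Tmap, pairMatrix, eps, Fin.sum_univ_succ] <;>
    ring

theorem exists_dotM_Tmap_pos {lam : M33} (hlam : lam ≠ 0) : ∃ A, 0 < dotM lam (Tmap A) := by
  obtain ⟨Z, p, hZp⟩ : ∃ Z p, lam Z p ≠ 0 := by
    by_contra! h
    exact hlam (funext₂ h)
  refine ⟨pairMatrix Z p (lam Z p), ?_⟩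
  rw [dotM_Tmap_pairMatrix, mul_assoc]
  exact mul_pos two_pos (mul_self_pos.2 hZp)

theorem stmt12_general (α ℓ : ℝ) (hα2 : α < 2)
    (lam : M33) (hlam : lam ≠ 0) (mu : M33) :
    gH (fun A => ℓ * fnorm A ^ α) lam mu = ⊤ := by
  obtain ⟨A, hA⟩ := exists_dotM_Tmap_pos hlam
  refine EReal.iSup_coe_eq_top_of_not_bddAbove fun hbdd => ?_
  have hray := tendsto_quadratic_sub_rpow_atTop hA hα2 (dotM A mu) (ℓ * fnorm A ^ α)
  refine not_bddAbove_of_tendsto_atTop (hray.congr' ?_)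
    (hbdd.mono (range_comp_subset_range (fun t : ℝ => t • A) _))
  filter_upwards [eventually_ge_atTop 0] with t ht
  simp only [Function.comp_apply, dotM_smul_left, Tmap_smul, dotM_smul_right, fnorm_smul,
    abs_of_nonneg ht, Real.mul_rpow ht (fnorm_nonneg A)]
  ring

theorem stmt12 (α ℓ : ℝ) (hα1 : 1 ≤ α) (hα2 : α < 2) (hℓ : 0 < ℓ)
    (lam : M33) (hlam : lam ≠ 0) (mu : M33) :
    gH (fun A => ℓ * fnorm A ^ α) lam mu = ⊤ :=
  stmt12_general α ℓ hα2 lam hlam mu
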